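/- For any integer m ≥ 1 and any sequence c : ℕ → ℤ satisfying c(n+m+1) + c(n) = [c(n+m)]₊ + [c(n+1)]₊ for all n ≥ 0, the difference sequence Δ(n) := c(n+m) − c(n) is bounded above; moreover there exist N ∈ ℕ and an integer K ≥ 0 such that Δ(n) = K for all n ≥ N. -/

import Mathlib

/-!
Write `Δ(n) = c(n+m) - c(n)`. The recurrence says that `Δ(n+1) - Δ(n)` is the sum of the negative
parts of `c(n+m)` and `c(n+1)`, so `Δ` is nondecreasing and is constant exactly where `c` is
nonnegative. Hence `c` is eventually nonnegative: either `Δ` stays `≤ 0`, so it stabilizes, or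
`Δ ≥ 1` from some point on, and then `c` grows along every residue class mod `m`. Once `c ≥ 0`,
`Δ` is a constant `K`, and `K ≥ 0` because `c` grows by `K` along each residue class.
-/

namespace Int

theorem eventually_nonneg_of_add_one_le_add {f : ℕ → ℤ} {m N : ℕ}
    (h : ∀ n ≥ N, f n + 1 ≤ f (n + m)) : ∃ M, ∀ n ≥ M, 0 ≤ f n := by
  have hm : 0 < m := Nat.pos_of_ne_zero fun hm0 => by simpa [hm0] using h N le_rfl
  obtain ⟨L, hL⟩ := ((Set.finite_lt_nat (N + m)).image f).bddBelow
  have hlow : ∀ n ≥ N, L + ((n - N) / m : ℕ) ≤ f n := by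
    intro n
    induction n using Nat.strong_induction_on with
    | _ n ih =>
      intro hn
      by_cases hlt : n < N + m
      · rw [Nat.div_eq_of_lt (by omega)]
        simpa using hL (Set.mem_image_of_mem f hlt)
      · have hprev := ih (n - m) (by omega) (by omega)
        have hstep := h (n - m) (by omega)
        rw [Nat.sub_add_cancel (by omega)] at hstep
        rw [Nat.div_eq_sub_div hm (by omega), show n - N - m = n - m - N by omega, Nat.cast_succ]
        linarith
  refine ⟨N + (-L).toNat * m, fun n hn => ?_⟩
  have hdiv : (-L).toNat ≤ (n - N) / m := by
    rw [Nat.le_div_iff_mul_le hm]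
    omega
  have hfn := hlow n (by omega)
  have hL' : -L ≤ ((n - N) / m : ℕ) := (Int.self_le_toNat _).trans (by exact_mod_cast hdiv)
  linarith

theorem nonneg_of_forall_add_sub_eq {f : ℕ → ℤ} {m N : ℕ} {K : ℤ}
    (hK : ∀ n ≥ N, f (n + m) - f n = K) (hf : ∀ n ≥ N, 0 ≤ f n) : 0 ≤ K := by
  have hprog : ∀ k : ℕ, f (N + k * m) = f N + k * K := by
    intro k
    induction k with
    | zero => simp
    | succ k ih =>
      have hstep := hK (N + k * m) (by omega)
      rw [show N + (k + 1) * m = N + k * m + m by ring]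
      push_cast
      linarith
  by_contra! hneg
  have hk := hf (N + ((f N).toNat + 1) * m) (by omega)
  rw [hprog] at hk
  push_cast at hk
  nlinarith [Int.self_le_toNat (f N)]

theorem exists_forall_ge_eq_of_monotone_of_le {f : ℕ → ℤ} {B : ℤ} (hf : Monotone f)
    (hB : ∀ n, f n ≤ B) : ∃ N, ∀ n ≥ N, f n = f N := by
  obtain ⟨g, ⟨N, rfl⟩, hg⟩ :=
    Int.exists_greatest_of_bdd (P := (· ∈ Set.range f)) ⟨B, by rintro _ ⟨n, rfl⟩; exact hB n⟩
      ⟨f 0, 0, rfl⟩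
  exact ⟨N, fun n hn => le_antisymm (hg _ ⟨n, rfl⟩) (hf hn)⟩

end Int

namespace TropicalCoeff

variable {m : ℕ} {c : ℕ → ℤ}
  (hrec : ∀ n : ℕ, c (n + m + 1) + c n = max 0 (c (n + m)) + max 0 (c (n + 1)))
include hrec

theorem diff_succ (n : ℕ) :
    c (n + 1 + m) - c (n + 1) = c (n + m) - c n + (max 0 (c (n + m)) - c (n + m)) +
      (max 0 (c (n + 1)) - c (n + 1)) := by
  rw [Nat.add_right_comm]
  linarith [hrec n]

theorem monotone_diff : Monotone fun n => c (n + m) - c n :=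
  monotone_nat_of_le_succ fun n => by
    linarith [diff_succ hrec n, le_max_right 0 (c (n + m)), le_max_right 0 (c (n + 1))]

theorem diff_eq_of_nonneg {M : ℕ} (hc : ∀ n ≥ M, 0 ≤ c n) :
    ∀ n ≥ M, c (n + m) - c n = c (M + m) - c M := by
  intro n hn
  induction n, hn using Nat.le_induction with
  | base => rfl
  | succ n hn ih =>
    rw [diff_succ hrec, max_eq_right (hc _ (by omega)), max_eq_right (hc _ (by omega)), ih]
    ring

theorem nonneg_of_diff_eq {N : ℕ} {K : ℤ} (hK : ∀ n ≥ N, c (n + m) - c n = K) :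
    ∀ n ≥ N + 1, 0 ≤ c n := by
  intro n hn
  obtain ⟨n, rfl⟩ : ∃ k, n = k + 1 := ⟨n - 1, by omega⟩
  have hstep := diff_succ hrec n
  rw [hK n (by omega), hK (n + 1) (by omega)] at hstep
  have hmax : max 0 (c (n + 1)) = c (n + 1) := by
    linarith [le_max_right 0 (c (n + m)), le_max_right 0 (c (n + 1))]
  exact hmax ▸ le_max_left _ _

theorem eventually_nonneg : ∃ M, ∀ n ≥ M, 0 ≤ c n := by
  by_cases hpos : ∃ N, 1 ≤ c (N + m) - c N
  · obtain ⟨N, hN⟩ := hpos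
    exact Int.eventually_nonneg_of_add_one_le_add fun n hn => by
      linarith [monotone_diff hrec hn]
  · push Not at hpos
    obtain ⟨N, hN⟩ := Int.exists_forall_ge_eq_of_monotone_of_le (B := 0) (monotone_diff hrec)
      fun n => Int.lt_add_one_iff.mp (hpos n)
    exact ⟨N + 1, nonneg_of_diff_eq hrec hN⟩

end TropicalCoeff

open TropicalCoeff in
theorem tropical_coeff_difference_bounded_and_eventually_constant_general (m : ℕ)
    (c : ℕ → ℤ)
    (hrec : ∀ n : ℕ, c (n + m + 1) + c n = max 0 (c (n + m)) + max 0 (c (n + 1))) :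
    (∃ B : ℤ, ∀ n : ℕ, c (n + m) - c n ≤ B) ∧
    (∃ N : ℕ, ∃ K : ℤ, 0 ≤ K ∧ ∀ n ≥ N, c (n + m) - c n = K) := by
  obtain ⟨M, hM⟩ := eventually_nonneg hrec
  have hconst := diff_eq_of_nonneg hrec hM
  have hK := Int.nonneg_of_forall_add_sub_eq hconst hM
  refine ⟨⟨c (M + m) - c M, fun n => ?_⟩, M, _, hK, hconst⟩
  calc c (n + m) - c n ≤ c (max n M + m) - c (max n M) := monotone_diff hrec (le_max_left n M)
    _ = c (M + m) - c M := hconst _ (le_max_right n M)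

/-- The difference sequence `Δ(n) = c(n+m) − c(n)` of the tropical coefficient recurrence is
bounded above and eventually equal to a nonnegative integer constant. -/
theorem tropical_coeff_difference_bounded_and_eventually_constant (m : ℕ) (hm : 1 ≤ m)
    (c : ℕ → ℤ)
    (hrec : ∀ n : ℕ, c (n + m + 1) + c n = max 0 (c (n + m)) + max 0 (c (n + 1))) :
    (∃ B : ℤ, ∀ n : ℕ, c (n + m) - c n ≤ B) ∧
    (∃ N : ℕ, ∃ K : ℤ, 0 ≤ K ∧ ∀ n ≥ N, c (n + m) - c n = K) :=
  tropical_coeff_difference_bounded_and_eventually_constant_general m c hrec
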